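/- Let Γ be a finitely generated additive subgroup of ℝ that is free of rank N with N ≥ 1, let Λ = {λ ∈ ℝ : λ ≠ 0 and λ•Γ = Γ}, and let κ be the subfield of ℝ generated by Λ over ℚ. Then κ is finite-dimensional over ℚ and its degree [κ : ℚ] divides N. (Part of Proposition III.2.2(b): κ is a number field whose degree is a divisor of N.) -/

import Mathlib

open Submodule Module

/-- The set of real numbers whose multiplication stabilizes a finite-dimensional
`ℚ`-submodule `V` of `ℝ`, as an intermediate field of `ℝ/ℚ`. -/
noncomputable def stabField (V : Submodule ℚ ℝ) [FiniteDimensional ℚ V] :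
    IntermediateField ℚ ℝ where
  carrier := {l : ℝ | ∀ v ∈ V, l * v ∈ V}
  mul_mem' := fun {a c} ha hc v hv => by rw [mul_assoc]; exact ha _ (hc v hv)
  one_mem' := fun v hv => by simpa using hv
  add_mem' := fun {a c} ha hc v hv => by
    rw [add_mul]; exact V.add_mem (ha v hv) (hc v hv)
  zero_mem' := fun v hv => by simpa using V.zero_mem
  algebraMap_mem' := fun q v hv => by
    rw [← Algebra.smul_def]; exact V.smul_mem q hv
  inv_mem' := by
    intro l hl v hv
    rcases eq_or_ne l 0 with rfl | hl0
    · simpa using V.zero_mem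
    · -- multiplication by `l` is an injective, hence surjective, endomorphism of `V`
      let f : V →ₗ[ℚ] V :=
        { toFun := fun x => ⟨l * x, hl x x.2⟩
          map_add' := fun x y => by ext; simp [mul_add]
          map_smul' := fun q x => by ext; simp [mul_smul_comm] }
      have hinj : Function.Injective f := by
        intro x y hxy
        have : l * (x : ℝ) = l * (y : ℝ) := congrArg Subtype.val hxy
        exact Subtype.ext (mul_left_cancel₀ hl0 this)
      have hsurj : Function.Surjective f :=
        (LinearMap.injective_iff_surjective).mp hinj
      obtain ⟨w, hw⟩ := hsurj ⟨v, hv⟩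
      have hw' : l * (w : ℝ) = v := congrArg Subtype.val hw
      have : l⁻¹ * v = (w : ℝ) := by
        rw [← hw', inv_mul_cancel_left₀ hl0]
      rw [this]; exact w.2

lemma mem_stabField {V : Submodule ℚ ℝ} [FiniteDimensional ℚ V] {l : ℝ} :
    l ∈ stabField V ↔ ∀ v ∈ V, l * v ∈ V := Iff.rfl

set_option synthInstance.maxHeartbeats 1000000 in
set_option maxHeartbeats 1000000 in
/-- part of Proposition III.2.2(b).
Let `Γ` be a finitely generated additive subgroup of `ℝ` that is free of rank `N ≥ 1`
(witnessed by a `ℤ`-basis indexed by `Fin N`), let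
`Λ = {λ ∈ ℝ : λ ≠ 0 ∧ λ•Γ = Γ}` (the paper's `Aut(ρ)`), and let `κ` be the subfield of
`ℝ` generated by `Λ` over `ℚ`.  Then `κ` is finite-dimensional over `ℚ` and its degree
`[κ : ℚ]` divides `N`. -/
theorem stmt13 (Γ : AddSubgroup ℝ) (N : ℕ) (hN : 1 ≤ N) (b : Basis (Fin N) ℤ Γ) :
    FiniteDimensional ℚ
      (IntermediateField.adjoin ℚ
        {l : ℝ | l ≠ 0 ∧ (fun x : ℝ => l * x) '' (Γ : Set ℝ) = (Γ : Set ℝ)}) ∧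
    Module.finrank ℚ
      (IntermediateField.adjoin ℚ
        {l : ℝ | l ≠ 0 ∧ (fun x : ℝ => l * x) '' (Γ : Set ℝ) = (Γ : Set ℝ)}) ∣ N := by
  classical
  set Λ : Set ℝ := {l : ℝ | l ≠ 0 ∧ (fun x : ℝ => l * x) '' (Γ : Set ℝ) = (Γ : Set ℝ)}
  set V : Submodule ℚ ℝ := span ℚ (Γ : Set ℝ) with hV
  -- the images of the basis vectors in ℝ
  set v : Fin N → ℝ := fun i => ((b i : Γ) : ℝ) with hv
  have hvmem : ∀ i, v i ∈ Γ := fun i => (b i).2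
  -- the inclusion of Γ into ℝ as a ℤ-linear map
  let ι : (AddSubgroup.toIntSubmodule Γ) →ₗ[ℤ] ℝ := (AddSubgroup.toIntSubmodule Γ).subtype
  have hιinj : Function.Injective ι := Subtype.coe_injective
  -- linear independence over ℤ, hence over ℚ
  have hliZ : LinearIndependent ℤ v := by
    have := b.linearIndependent.map' ι (LinearMap.ker_eq_bot.mpr hιinj)
    exact this
  have hliQ : LinearIndependent ℚ v := (LinearIndependent.iff_fractionRing ℤ ℚ).mp hliZ
  -- the span of v over ℚ is V
  have hspanZ : span ℤ (Set.range v) = AddSubgroup.toIntSubmodule Γ := by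
    have h1 : Submodule.map ι (span ℤ (Set.range b)) = span ℤ (Set.range v) := by
      rw [Submodule.map_span]
      congr 1
      ext x
      constructor
      · rintro ⟨_, ⟨i, rfl⟩, rfl⟩
        exact ⟨i, rfl⟩
      · rintro ⟨i, rfl⟩
        exact ⟨b i, ⟨i, rfl⟩, rfl⟩
    rw [← h1]
    ext x
    constructor
    · intro hx
      obtain ⟨y, -, rfl⟩ := Submodule.mem_map.mp hx
      exact y.2
    · intro hx
      exact Submodule.mem_map.mpr ⟨⟨x, hx⟩, b.mem_span _, rfl⟩
  have hspan : span ℚ (Set.range v) = V := by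
    apply le_antisymm
    · rw [Submodule.span_le]
      rintro _ ⟨i, rfl⟩
      exact subset_span (hvmem i)
    · rw [Submodule.span_le]
      intro x hx
      have : x ∈ span ℤ (Set.range v) := by
        rw [hspanZ]; exact hx
      have h2 : (span ℤ (Set.range v) : Set ℝ) ⊆ (span ℚ (Set.range v) : Set ℝ) :=
        Submodule.span_subset_span ℤ ℚ _
      exact h2 this
  -- V is finite dimensional of dimension N
  have hVrank : finrank ℚ V = N := by
    rw [← hspan, finrank_span_eq_card hliQ, Fintype.card_fin]
  have hVfin : FiniteDimensional ℚ V := by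
    rw [← hspan]
    exact FiniteDimensional.span_of_finite ℚ (Set.finite_range v)
  -- every element of Λ stabilizes V
  have hΛstab : Λ ⊆ (stabField V : Set ℝ) := by
    rintro l ⟨hl0, hlΓ⟩
    rw [SetLike.mem_coe, mem_stabField]
    intro x hx
    have key : ∀ y ∈ (Γ : Set ℝ), l * y ∈ (Γ : Set ℝ) := by
      intro y hy
      rw [← hlΓ]
      exact ⟨y, hy, rfl⟩
    refine Submodule.span_induction (fun y hy => subset_span (key y hy)) ?_ ?_ ?_ hx
    · simpa using V.zero_mem
    · intro y z _ _ hy hz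
      rw [mul_add]; exact V.add_mem hy hz
    · intro q y _ hy
      rw [mul_smul_comm]; exact V.smul_mem q hy
  -- κ ≤ stabField V
  set κ : IntermediateField ℚ ℝ := IntermediateField.adjoin ℚ Λ with hκ
  have hκle : κ ≤ stabField V := IntermediateField.adjoin_le_iff.mpr hΛstab
  -- V as a κ-submodule of ℝ
  let W : Submodule κ ℝ :=
    { carrier := (V : Set ℝ)
      add_mem' := fun hx hy => V.add_mem hx hy
      zero_mem' := V.zero_mem
      smul_mem' := fun c x hx => by
        have hc : ∀ y ∈ V, (c : ℝ) * y ∈ V := mem_stabField.mp (hκle c.2)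
        have : (c : ℝ) * x ∈ V := hc x hx
        simpa [Algebra.smul_def] using this }
  have hWV : (W.restrictScalars ℚ : Submodule ℚ ℝ) = V := by
    ext x; rfl
  have hWfin : FiniteDimensional ℚ W := by
    have : FiniteDimensional ℚ (W.restrictScalars ℚ) := by rw [hWV]; exact hVfin
    exact this
  have hWrank : finrank ℚ W = N := by
    have : finrank ℚ (W.restrictScalars ℚ) = N := by rw [hWV]; exact hVrank
    exact this
  -- a nonzero element of W
  have hv0 : v ⟨0, hN⟩ ≠ 0 := by
    intro h
    exact hliQ.ne_zero ⟨0, hN⟩ (by simp [h])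
  have hv0W : v ⟨0, hN⟩ ∈ W := subset_span (hvmem ⟨0, hN⟩)
  -- κ embeds ℚ-linearly into W, hence is finite dimensional
  let g : κ →ₗ[ℚ] W :=
    { toFun := fun c => ⟨(c : ℝ) * v ⟨0, hN⟩, by
        have hc : ∀ y ∈ V, (c : ℝ) * y ∈ V := mem_stabField.mp (hκle c.2)
        exact hc _ (subset_span (hvmem ⟨0, hN⟩))⟩
      map_add' := fun x y => by ext; simp [add_mul]
      map_smul' := fun q x => by ext; simp [Algebra.smul_def, mul_assoc] }
  have hginj : Function.Injective g := by
    intro x y hxy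
    have : (x : ℝ) * v ⟨0, hN⟩ = (y : ℝ) * v ⟨0, hN⟩ := congrArg Subtype.val hxy
    exact Subtype.ext (mul_right_cancel₀ hv0 this)
  have hκfin : FiniteDimensional ℚ κ := FiniteDimensional.of_injective g hginj
  refine ⟨hκfin, ?_⟩
  -- tower law
  have htower : finrank ℚ κ * finrank κ W = finrank ℚ W :=
    Module.finrank_mul_finrank ℚ κ W
  rw [hWrank] at htower
  exact ⟨finrank κ W, htower.symm⟩
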